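/- For each ω ∈ Ω and ε ∈ I let T_{ω,ε} : 𝕋 → 𝕋 be a C² covering map with min|T′_{ω,ε}| ≥ γ_ω > 0, write T_ω := T_{ω,0}, and let L_{ω,ε} denote the transfer operator of T_{ω,ε} with respect to Lebesgue measure. Suppose there is a random variable q(ω) such that for all ε ∈ I: d_{C¹}(T_{ω,ε}, T_ω) ≤ q(ω)·|ε|, and for every x ∈ 𝕋 the preimage sets can be enumerated as T_{ω,ε}^{−1}{x} = {y_{ε,i,ω}(x)} and T_ω^{−1}{x} = {y_{i,ω}(x)} with sup_{x,i} d(y_{ε,i,ω}(x), y_{i,ω}(x)) ≤ q(ω)·|ε|. Suppose also ‖L_ω 𝟙‖_∞ ≤ E(ω). Then for ℙ-a.e. ω, every g ∈ C¹(𝕋) and every ε ∈ I: ‖(L_{ω,ε} − L_ω) g‖_∞ ≤ |ε| · q̄(ω) · ‖g‖_{C¹}, where q̄(ω) := E(ω)·q(ω)·(1 + γ_ω^{−1} + γ_ω^{−1}·‖T_ω″‖_∞). -/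

import Mathlib

open MeasureTheory Function

noncomputable section

/-- `C ∈ L^p(Ω,𝓕,ℙ)` for a nonnegative random variable `C`. -/
def MemLpRV {Ω : Type*} [MeasurableSpace Ω] (ℙ : Measure Ω) (p : ℝ) (C : Ω → ℝ) : Prop :=
  Measurable C ∧ (∀ ω, 0 ≤ C ω) ∧ Integrable (fun ω => C ω ^ p) ℙ

/-- The `C^r` norm of a (1-periodic) function on `ℝ`:
`max_{0 ≤ i ≤ r} sup_x |f^{(i)}(x)|`. -/
def crNorm (r : ℕ) (f : ℝ → ℝ) : ℝ :=
  ⨆ p : Fin (r + 1) × ℝ, |iteratedDeriv (p.1 : ℕ) f p.2|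

/-- The transfer operator (with respect to Lebesgue/Haar measure) of the circle map
induced by the lift `T : ℝ → ℝ`, acting on (1-periodic) functions:
`L g (x) = Σ_{y : T y = x} g(y)/|T'(y)|`, the sum running over the preimages of `x`
in a fundamental domain `[0,1)`. -/
def transferOp (T : ℝ → ℝ) (g : ℝ → ℝ) (x : ℝ) : ℝ :=
  ∑' y : {y : ℝ // y ∈ Set.Ico (0 : ℝ) 1 ∧ ∃ k : ℤ, T y = x + k}, g (y : ℝ) / |deriv T (y : ℝ)|

/-- Iterates of maps along an orbit of `σ`: `T^n_ω = T_{σ^{n-1}ω} ∘ ⋯ ∘ T_ω`. -/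
def mapIter {Ω : Type*} (σ : Ω → Ω) (T : Ω → ℝ → ℝ) : ℕ → Ω → ℝ → ℝ
  | 0, _, x => x
  | n + 1, ω, x => mapIter σ T n (σ ω) (T ω x)

/-- Iterates of the transfer operators along an orbit of `σ`:
`L^n_ω = L_{σ^{n-1}ω} ∘ ⋯ ∘ L_ω`. -/
def transferIter {Ω : Type*} (σ : Ω → Ω) (T : Ω → ℝ → ℝ) : ℕ → Ω → (ℝ → ℝ) → ℝ → ℝ
  | 0, _, g => g
  | n + 1, ω, g => transferIter σ T n (σ ω) (transferOp (T ω) g)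

/-- The composition `z_n ∘ z_{n-1} ∘ ⋯ ∘ z_1` (the empty composition is the identity). -/
def compSeq (z : ℕ → ℝ → ℝ) : ℕ → ℝ → ℝ
  | 0, x => x
  | n + 1, x => z (n + 1) (compSeq z n x)

/-- Birkhoff sums `S_n φ (x) = Σ_{j<n} φ_{σ^j ω}(T^j_ω x)` along an orbit of `σ`. -/
def birkSum {Ω : Type*} (σ : Ω → Ω) (T : Ω → ℝ → ℝ) (φ : Ω → ℝ → ℝ) (n : ℕ) (ω : Ω)
    (x : ℝ) : ℝ :=
  ∑ j ∈ Finset.range n, φ (σ^[j] ω) (mapIter σ T j ω x)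

/-- Integral over the circle (one period). -/
def circInt (g : ℝ → ℝ) : ℝ := ∫ x in Set.Ioc (0 : ℝ) 1, g x

/-!
Enumerate the preimages of `x` under `T_{ω,ε}` and `T_ω` by the same index set. Then
`(L_{ω,ε} - L_ω) g (x)` is a finite sum whose `i`-th term is at most
`|ε| q ‖g‖_{C¹} (1 + γ⁻¹ + γ⁻¹ ‖T_ω''‖_∞) / |T_ω'(y_i)|`. The numerators differ by at most
`‖g'‖_∞ |y_{ε,i} - y_i|`, and the Jacobians by at most
`|T_{ω,ε}' - T_ω'| + ‖T_ω''‖_∞ |y_{ε,i} - y_i|`. Summing over `i`, the weights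
`1 / |T_ω'(y_i)|` add up to `L_ω 𝟙 (x) ≤ E(ω)`. This holds for every `ω`, so in particular
almost surely.
-/

open Set

lemma abs_sub_le_of_abs_deriv_le {f : ℝ → ℝ} {C : ℝ} (hf : Differentiable ℝ f)
    (hC : ∀ x, |deriv f x| ≤ C) (s t : ℝ) : |f s - f t| ≤ C * |s - t| := by
  simpa [Real.norm_eq_abs] using Convex.norm_image_sub_le_of_norm_deriv_le (fun x _ => hf x)
    (fun x _ => by simpa using hC x) convex_univ (mem_univ t) (mem_univ s)

lemma periodic_deriv_of_add_const {f : ℝ → ℝ} {c d : ℝ} (h : ∀ x, f (x + c) = f x + d) :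
    Periodic (deriv f) c := by
  intro x
  calc deriv f (x + c) = deriv (fun y => f (y + c)) x := (deriv_comp_add_const ..).symm
    _ = deriv f x := by simp only [h, deriv_add_const]

lemma Function.Periodic.iteratedDeriv {f : ℝ → ℝ} {c : ℝ} (hf : Periodic f c) (k : ℕ) :
    Periodic (iteratedDeriv k f) c := by
  induction k with
  | zero => simpa using hf
  | succ k ih =>
    rw [iteratedDeriv_succ]
    exact periodic_deriv_of_add_const fun x => by rw [ih x, add_zero]

lemma Function.Periodic.exists_abs_le_of_continuous {f : ℝ → ℝ} {c : ℝ} (hp : Periodic f c)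
    (hc : c ≠ 0) (hf : Continuous f) : ∃ C, ∀ x, |f x| ≤ C := by
  obtain ⟨C, hC⟩ := isBounded_iff_forall_norm_le.mp (hp.isBounded_of_continuous hc hf)
  exact ⟨C, fun x => hC _ (mem_range_self x)⟩

lemma abs_iteratedDeriv_le_crNorm {r k : ℕ} {f : ℝ → ℝ} (hf : ContDiff ℝ r f)
    (hp : Periodic f 1) (hk : k ≤ r) (x : ℝ) : |iteratedDeriv k f x| ≤ crNorm r f := by
  have hbound (j : Fin (r + 1)) : ∃ C, ∀ x, |iteratedDeriv j f x| ≤ C :=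
    (hp.iteratedDeriv j).exists_abs_le_of_continuous one_ne_zero
      (hf.continuous_iteratedDeriv j (by exact_mod_cast Nat.lt_succ_iff.mp j.is_lt))
  choose C hC using hbound
  refine le_ciSup (f := fun p : Fin (r + 1) × ℝ => |iteratedDeriv p.1 f p.2|)
    ⟨⨆ j, C j, ?_⟩ (⟨k, Nat.lt_succ_of_le hk⟩, x)
  rintro _ ⟨⟨j, z⟩, rfl⟩
  exact (hC j z).trans (le_ciSup (Finite.bddAbove_range C) j)

lemma crNorm_zero (f : ℝ → ℝ) : crNorm 0 f = ⨆ x, |f x| := by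
  rw [crNorm, ← (Equiv.uniqueProd ℝ (Fin 1)).symm.iSup_comp]
  simp [Equiv.uniqueProd]

lemma abs_le_crNorm_zero {f : ℝ → ℝ} (hf : BddAbove (range fun x => |f x|)) (x : ℝ) :
    |f x| ≤ crNorm 0 f :=
  crNorm_zero f ▸ le_ciSup hf x

lemma crNorm_zero_le {f : ℝ → ℝ} {C : ℝ} (h : ∀ x, |f x| ≤ C) : crNorm 0 f ≤ C :=
  crNorm_zero f ▸ ciSup_le h

lemma Function.Periodic.abs_le_iSup_abs {f : ℝ → ℝ} {c : ℝ} (hp : Periodic f c) (hc : c ≠ 0)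
    (hf : Continuous f) (x : ℝ) : |f x| ≤ ⨆ y, |f y| := by
  obtain ⟨C, hC⟩ := hp.exists_abs_le_of_continuous hc hf
  exact le_ciSup ⟨C, forall_mem_range.2 hC⟩ x

lemma abs_deriv_deriv_le_iSup_of_add_const {f : ℝ → ℝ} {c d : ℝ} (hf : ContDiff ℝ 2 f)
    (hc : c ≠ 0) (h : ∀ x, f (x + c) = f x + d) (z : ℝ) :
    |deriv (deriv f) z| ≤ ⨆ x, |iteratedDeriv 2 f x| := by
  have h₂ : iteratedDeriv 2 f = deriv (deriv f) := by rw [iteratedDeriv_succ', iteratedDeriv_one]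
  have hp : Periodic (iteratedDeriv 2 f) c := by
    rw [iteratedDeriv_succ']
    exact (periodic_deriv_of_add_const h).iteratedDeriv 1
  exact h₂ ▸ hp.abs_le_iSup_abs hc (hf.continuous_iteratedDeriv 2 le_rfl) z

lemma abs_div_abs_sub_div_abs_le {a b A B γ : ℝ} (hγ : 0 < γ) (hA : γ ≤ |A|) (hB : B ≠ 0) :
    abs (a / |A| - b / |B|) ≤ (|a - b| + |a| * |A - B| / γ) / |B| := by
  have hA₀ : 0 < |A| := hγ.trans_le hA
  have hsplit : a / |A| - b / |B| = ((a - b) + a * ((|B| - |A|) / |A|)) / |B| := by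
    field_simp
    ring
  rw [hsplit, abs_div, abs_abs]
  gcongr
  refine (abs_add_le _ _).trans (add_le_add_right ?_ _)
  have hBA : abs (|B| - |A|) ≤ |A - B| := by
    rw [abs_sub_comm]
    exact abs_abs_sub_abs_le_abs_sub A B
  rw [abs_mul, abs_div, abs_abs, mul_div_assoc]
  exact mul_le_mul_of_nonneg_left (div_le_div₀ (abs_nonneg _) hBA hγ hA) (abs_nonneg _)

lemma abs_div_abs_deriv_sub_div_abs_deriv_le {T₀ T₁ g : ℝ → ℝ} {a b γ δ M S : ℝ} (hγ : 0 < γ)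
    (hT₁ : γ ≤ |deriv T₁ a|) (hT₀ : deriv T₀ b ≠ 0) (hdT : |deriv T₁ a - deriv T₀ a| ≤ δ)
    (hT₀' : Differentiable ℝ (deriv T₀)) (hS : ∀ z, |deriv (deriv T₀) z| ≤ S)
    (hg : Differentiable ℝ g) (hgM : ∀ z, |g z| ≤ M) (hg'M : ∀ z, |deriv g z| ≤ M)
    (hab : |a - b| ≤ δ) :
    abs (g a / |deriv T₁ a| - g b / |deriv T₀ b|) ≤
      δ * M * (1 + γ⁻¹ + γ⁻¹ * S) / |deriv T₀ b| := by
  have hM : 0 ≤ M := (abs_nonneg _).trans (hgM a)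
  have hS₀ : 0 ≤ S := (abs_nonneg _).trans (hS a)
  have hgab : |g a - g b| ≤ M * δ :=
    (abs_sub_le_of_abs_deriv_le hg hg'M a b).trans (by gcongr)
  have hTab : |deriv T₁ a - deriv T₀ b| ≤ (1 + S) * δ :=
    calc |deriv T₁ a - deriv T₀ b|
        ≤ |deriv T₁ a - deriv T₀ a| + |deriv T₀ a - deriv T₀ b| := abs_sub_le _ _ _
      _ ≤ δ + S * δ :=
        add_le_add hdT ((abs_sub_le_of_abs_deriv_le hT₀' hS a b).trans (by gcongr))
      _ = (1 + S) * δ := by ring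
  refine (abs_div_abs_sub_div_abs_le hγ hT₁ hT₀).trans ?_
  gcongr
  calc |g a - g b| + |g a| * |deriv T₁ a - deriv T₀ b| / γ
      ≤ M * δ + M * ((1 + S) * δ) / γ := by gcongr; exact hgM a
    _ = δ * M * (1 + γ⁻¹ + γ⁻¹ * S) := by field_simp; ring

def EnumeratesPreimages (T : ℝ → ℝ) (x : ℝ) (n : ℕ) (y : ℕ → ℝ) : Prop :=
  (∀ i < n, y i ∈ Ico (0 : ℝ) 1 ∧ ∃ k : ℤ, T (y i) = x + k) ∧
  (∀ i < n, ∀ j < n, i ≠ j → y i ≠ y j) ∧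
  (∀ z ∈ Ico (0 : ℝ) 1, (∃ k : ℤ, T z = x + k) → ∃ i < n, y i = z)

namespace EnumeratesPreimages

variable {T : ℝ → ℝ} {x : ℝ} {n : ℕ} {y : ℕ → ℝ}

lemma transferOp_eq_sum (h : EnumeratesPreimages T x n y) (g : ℝ → ℝ) :
    transferOp T g x = ∑ i : Fin n, g (y i) / |deriv T (y i)| := by
  obtain ⟨hmem, hinj, hsurj⟩ := h
  let e : Fin n → {z : ℝ // z ∈ Ico (0 : ℝ) 1 ∧ ∃ k : ℤ, T z = x + k} :=
    fun i => ⟨y i, hmem i i.2⟩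
  have he : Bijective e := by
    refine ⟨fun i j hij => ?_, fun ⟨z, hz, hTz⟩ => ?_⟩
    · by_contra hne
      exact hinj i i.2 j j.2 (Fin.val_ne_of_ne hne) (congrArg Subtype.val hij)
    · obtain ⟨i, hi, rfl⟩ := hsurj z hz hTz
      exact ⟨⟨i, hi⟩, rfl⟩
  rw [transferOp, ← (Equiv.ofBijective e he).tsum_eq, tsum_fintype]
  rfl

lemma abs_transferOp_one_le (h : EnumeratesPreimages T x n y) {γ : ℝ} (hγ : 0 < γ)
    (hT : ∀ z, γ ≤ |deriv T z|) : |transferOp T (fun _ => 1) x| ≤ n * γ⁻¹ := by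
  rw [h.transferOp_eq_sum]
  calc abs (∑ i : Fin n, 1 / |deriv T (y i)|)
      = ∑ i : Fin n, 1 / |deriv T (y i)| := abs_of_nonneg (by positivity)
    _ ≤ ∑ _i : Fin n, γ⁻¹ := by
      gcongr with i
      rw [one_div]
      exact inv_anti₀ hγ (hT _)
    _ = n * γ⁻¹ := by simp

lemma abs_transferOp_sub_le {T₀ T₁ g : ℝ → ℝ} {y₀ y₁ : ℕ → ℝ} {γ δ M S : ℝ}
    (h₀ : EnumeratesPreimages T₀ x n y₀) (h₁ : EnumeratesPreimages T₁ x n y₁)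
    (hy : ∀ i < n, |y₁ i - y₀ i| ≤ δ) (hγ : 0 < γ) (hT₀γ : ∀ z, γ ≤ |deriv T₀ z|)
    (hT₁γ : ∀ z, γ ≤ |deriv T₁ z|) (hdT : ∀ z, |deriv T₁ z - deriv T₀ z| ≤ δ)
    (hT₀' : Differentiable ℝ (deriv T₀)) (hS : ∀ z, |deriv (deriv T₀) z| ≤ S)
    (hg : Differentiable ℝ g) (hgM : ∀ z, |g z| ≤ M) (hg'M : ∀ z, |deriv g z| ≤ M) :
    |transferOp T₁ g x - transferOp T₀ g x| ≤
      transferOp T₀ (fun _ => 1) x * (δ * M * (1 + γ⁻¹ + γ⁻¹ * S)) := by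
  rw [h₁.transferOp_eq_sum, h₀.transferOp_eq_sum g, h₀.transferOp_eq_sum (fun _ => 1),
    ← Finset.sum_sub_distrib, Finset.sum_mul]
  refine (Finset.abs_sum_le_sum_abs _ _).trans (Finset.sum_le_sum fun i _ => ?_)
  rw [one_div_mul_eq_div]
  exact abs_div_abs_deriv_sub_div_abs_deriv_le hγ (hT₁γ _)
    (abs_pos.mp (hγ.trans_le (hT₀γ _))) (hdT _) hT₀' hS hg hgM hg'M (hy i i.2)

end EnumeratesPreimages

theorem stmt_13_general
    {Ω : Type*} [MeasurableSpace Ω] (ℙ : Measure Ω)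
    (I : Set ℝ) (hI0 : (0 : ℝ) ∈ I)
    -- lifts of the C² covering maps T_{ω,ε} : 𝕋 → 𝕋, with min |T'| ≥ γ_ω > 0
    (T : Ω → ℝ → ℝ → ℝ) (γ : Ω → ℝ) (hγ : ∀ ω, 0 < γ ω)
    (hT : ∀ ω, ∀ ε ∈ I, ContDiff ℝ 2 (T ω ε) ∧
      (∃ d : ℤ, ∀ x, T ω ε (x + 1) = T ω ε x + d) ∧
      ∀ x, γ ω ≤ |deriv (T ω ε) x|)
    -- d_{C¹}(T_{ω,ε}, T_{ω,0}) ≤ q(ω)|ε|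
    (q : Ω → ℝ)
    (hdC1 : ∀ ω, ∀ ε ∈ I, ∀ x : ℝ,
      |T ω ε x - T ω 0 x| ≤ q ω * |ε| ∧
      |deriv (T ω ε) x - deriv (T ω 0) x| ≤ q ω * |ε|)
    -- enumeration and pairing of the preimages
    (deg : Ω → ℕ) (y : Ω → ℝ → ℝ → ℕ → ℝ)
    (henum : ∀ ω, ∀ ε ∈ I, ∀ x : ℝ,
      (∀ i < deg ω, y ω ε x i ∈ Set.Ico (0 : ℝ) 1 ∧ ∃ k : ℤ, T ω ε (y ω ε x i) = x + k) ∧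
      (∀ i < deg ω, ∀ j < deg ω, i ≠ j → y ω ε x i ≠ y ω ε x j) ∧
      (∀ z ∈ Set.Ico (0 : ℝ) 1, (∃ k : ℤ, T ω ε z = x + k) → ∃ i < deg ω, y ω ε x i = z))
    (hpair : ∀ ω, ∀ ε ∈ I, ∀ x : ℝ, ∀ i < deg ω,
      |y ω ε x i - y ω 0 x i| ≤ q ω * |ε|)
    -- ‖L_{ω,0} 𝟙‖_∞ ≤ E(ω)
    (E : Ω → ℝ)
    (hE : ∀ ω, crNorm 0 (transferOp (T ω 0) (fun _ => 1)) ≤ E ω) :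
    ∀ᵐ ω ∂ℙ, ∀ g : ℝ → ℝ, ContDiff ℝ 1 g → Periodic g 1 → ∀ ε ∈ I,
      crNorm 0 (fun x => transferOp (T ω ε) g x - transferOp (T ω 0) g x) ≤
        |ε| *
          (E ω * q ω *
            (1 + (γ ω)⁻¹ + (γ ω)⁻¹ * ⨆ x : ℝ, |iteratedDeriv 2 (T ω 0) x|)) *
          crNorm 1 g := by
  refine ae_of_all _ fun ω g hg hgp ε hε => ?_
  have hpre : ∀ ε ∈ I, ∀ x, EnumeratesPreimages (T ω ε) x (deg ω) (y ω ε x) := henum ω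
  obtain ⟨hT₀, ⟨d, hd⟩, hT₀γ⟩ := hT ω 0 hI0
  have hT₀' : Differentiable ℝ (deriv (T ω 0)) := by
    simpa using hT₀.differentiable_iteratedDeriv 1 (by norm_num)
  have hS := abs_deriv_deriv_le_iSup_of_add_const hT₀ one_ne_zero hd
  have hgM (z : ℝ) : |g z| ≤ crNorm 1 g := by
    simpa using abs_iteratedDeriv_le_crNorm hg hgp zero_le_one z
  have hg'M (z : ℝ) : |deriv g z| ≤ crNorm 1 g := by
    simpa using abs_iteratedDeriv_le_crNorm hg hgp le_rfl z
  have hL₀ (x : ℝ) : transferOp (T ω 0) (fun _ => 1) x ≤ E ω :=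
    (le_abs_self _).trans <| (abs_le_crNorm_zero ⟨deg ω * (γ ω)⁻¹, forall_mem_range.2 fun x =>
      (hpre 0 hI0 x).abs_transferOp_one_le (hγ ω) hT₀γ⟩ x).trans (hE ω)
  set K := q ω * |ε| * crNorm 1 g *
    (1 + (γ ω)⁻¹ + (γ ω)⁻¹ * ⨆ x : ℝ, |iteratedDeriv 2 (T ω 0) x|) with hKdef
  have hK : 0 ≤ K := by
    have hγ₀ := hγ ω
    have hδ : 0 ≤ q ω * |ε| := (abs_nonneg _).trans (hdC1 ω ε hε 0).1
    have hM : 0 ≤ crNorm 1 g := (abs_nonneg _).trans (hgM 0)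
    have hS₀ := (abs_nonneg _).trans (hS 0)
    positivity
  refine crNorm_zero_le fun x => ?_
  calc _ ≤ transferOp (T ω 0) (fun _ => 1) x * K :=
        (hpre 0 hI0 x).abs_transferOp_sub_le (hpre ε hε x) (hpair ω ε hε x) (hγ ω) hT₀γ
          (hT ω ε hε).2.2 (fun z => (hdC1 ω ε hε z).2) hT₀' hS (hg.differentiable one_ne_zero)
          hgM hg'M
    _ ≤ E ω * K := mul_le_mul_of_nonneg_right (hL₀ x) hK
    _ = _ := by rw [hKdef]; ring

theorem stmt_13
    {Ω : Type*} [MeasurableSpace Ω] (ℙ : Measure Ω) [IsProbabilityMeasure ℙ]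
    (I : Set ℝ) (hIopen : IsOpen I) (hIsub : I ⊆ Set.Ioo (-1) 1) (hI0 : (0 : ℝ) ∈ I)
    -- lifts of the C² covering maps T_{ω,ε} : 𝕋 → 𝕋, with min |T'| ≥ γ_ω > 0
    (T : Ω → ℝ → ℝ → ℝ) (γ : Ω → ℝ) (hγ : ∀ ω, 0 < γ ω)
    (hT : ∀ ω, ∀ ε ∈ I, ContDiff ℝ 2 (T ω ε) ∧
      (∃ d : ℤ, ∀ x, T ω ε (x + 1) = T ω ε x + d) ∧
      ∀ x, γ ω ≤ |deriv (T ω ε) x|)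
    -- d_{C¹}(T_{ω,ε}, T_{ω,0}) ≤ q(ω)|ε|
    (q : Ω → ℝ)
    (hdC1 : ∀ ω, ∀ ε ∈ I, ∀ x : ℝ,
      |T ω ε x - T ω 0 x| ≤ q ω * |ε| ∧
      |deriv (T ω ε) x - deriv (T ω 0) x| ≤ q ω * |ε|)
    -- enumeration and pairing of the preimages
    (deg : Ω → ℕ) (y : Ω → ℝ → ℝ → ℕ → ℝ)
    (henum : ∀ ω, ∀ ε ∈ I, ∀ x : ℝ,
      (∀ i < deg ω, y ω ε x i ∈ Set.Ico (0 : ℝ) 1 ∧ ∃ k : ℤ, T ω ε (y ω ε x i) = x + k) ∧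
      (∀ i < deg ω, ∀ j < deg ω, i ≠ j → y ω ε x i ≠ y ω ε x j) ∧
      (∀ z ∈ Set.Ico (0 : ℝ) 1, (∃ k : ℤ, T ω ε z = x + k) → ∃ i < deg ω, y ω ε x i = z))
    (hpair : ∀ ω, ∀ ε ∈ I, ∀ x : ℝ, ∀ i < deg ω,
      |y ω ε x i - y ω 0 x i| ≤ q ω * |ε|)
    -- ‖L_{ω,0} 𝟙‖_∞ ≤ E(ω)
    (E : Ω → ℝ)
    (hE : ∀ ω, crNorm 0 (transferOp (T ω 0) (fun _ => 1)) ≤ E ω) :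
    ∀ᵐ ω ∂ℙ, ∀ g : ℝ → ℝ, ContDiff ℝ 1 g → Periodic g 1 → ∀ ε ∈ I,
      crNorm 0 (fun x => transferOp (T ω ε) g x - transferOp (T ω 0) g x) ≤
        |ε| *
          (E ω * q ω *
            (1 + (γ ω)⁻¹ + (γ ω)⁻¹ * ⨆ x : ℝ, |iteratedDeriv 2 (T ω 0) x|)) *
          crNorm 1 g :=
  stmt_13_general ℙ I hI0 T γ hγ hT q hdC1 deg y henum hpair E hE
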